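/- Let d ≥ 2 and let A ∈ GL(d, ℤ) be a matrix all of whose complex eigenvalues equal 1 (equivalently, whose characteristic polynomial is (X-1)^d). Then there exists a matrix P ∈ GL(d, ℤ) with det(P) = 1 such that B = P⁻¹AP is upper unitriangular: B_{ij} = 0 for all 1 ≤ j < i ≤ d, B_{ii} = 1 for all 1 ≤ i ≤ d, and B_{ij} ∈ ℤ for all 1 ≤ i < j ≤ d. Consequently, every affine distal flow T(x) = Ax + a on 𝕋^d is topologically conjugate, via the homeomorphism h(x) = Px of 𝕋^d, to an affine distal flow T'(x) = Bx + b with B upper unitriangular and b = P⁻¹a, i.e. T ∘ h = h ∘ T'. -/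

import Mathlib

open Polynomial

noncomputable section

/-- The `d`-torus `ℝ^d/ℤ^d`, as a product of copies of `ℝ/ℤ`. -/
abbrev Torus (d : ℕ) := Fin d → AddCircle (1 : ℝ)

/-- The linear map `x ↦ M x` on the `d`-torus induced by an integer matrix `M`. -/
def torusLin {d : ℕ} (M : Matrix (Fin d) (Fin d) ℤ) (x : Torus d) : Torus d :=
  fun i => ∑ j, M i j • x j

/-- The affine map `x ↦ A x + a` on the `d`-torus, for an integer matrix `A`. -/
def torusAffine {d : ℕ} (A : Matrix (Fin d) (Fin d) ℤ) (a : Torus d) (x : Torus d) : Torus d :=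
  fun i => (∑ j, A i j • x j) + a i

/-! Cayley–Hamilton makes `A - 1` nilpotent. Over a PID, a nilpotent endomorphism `f` of a
finite free module is strictly upper triangular in some basis: `M ⧸ ker f` is torsion-free, hence
free, `f` induces on it a map of smaller nilpotency index, and a basis of `ker f` followed by lifts
of a triangularizing basis of the quotient triangularizes `f`. Rescaling one basis vector by a unit
makes the change-of-basis matrix `P` have determinant `1`, and then `x ↦ P x` is a homeomorphism of
the torus which `A P = P (P⁻¹ A P)` turns into a conjugacy of the affine maps. -/

namespace Module.Basis

variable {ι R M : Type*} [CommRing R] [AddCommGroup M] [Module R M]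

def IsStrictUpperTriangular [Preorder ι] (b : Basis ι R M) (f : Module.End R M) : Prop :=
  ∀ j, f (b j) ∈ Submodule.span R (b '' Set.Iio j)

theorem IsStrictUpperTriangular.toMatrix_eq_zero [LinearOrder ι] [Fintype ι] [DecidableEq ι]
    {b : Basis ι R M} {f : Module.End R M} (hb : b.IsStrictUpperTriangular f) {i j : ι}
    (hij : j ≤ i) : LinearMap.toMatrix b b f i j = 0 := by
  rw [LinearMap.toMatrix_apply]
  exact Finsupp.notMem_support_iff.mp fun hi =>
    (b.repr_support_subset_of_mem_span _ (hb j) hi).not_ge hij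

theorem IsStrictUpperTriangular.reindex {κ : Type*} [Preorder ι] [Preorder κ]
    {b : Basis ι R M} {f : Module.End R M} (hb : b.IsStrictUpperTriangular f) (e : ι ≃o κ) :
    (b.reindex e.toEquiv).IsStrictUpperTriangular f := by
  intro j
  rw [coe_reindex, Set.image_comp]
  change f (b (e.symm j)) ∈ Submodule.span R (b '' (e.symm '' Set.Iio j))
  rw [e.symm.image_Iio]
  exact hb _

theorem span_image_unitsSMul (b : Basis ι R M) (w : ι → Rˣ) (s : Set ι) :
    Submodule.span R (b.unitsSMul w '' s) = Submodule.span R (b '' s) := by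
  apply le_antisymm <;> refine Submodule.span_le.mpr ?_ <;> rintro _ ⟨i, hi, rfl⟩
  · rw [unitsSMul_apply, Units.smul_def]
    exact Submodule.smul_mem _ _ (Submodule.subset_span ⟨i, hi, rfl⟩)
  · rw [← inv_smul_smul (w i) (b i), ← unitsSMul_apply, Units.smul_def]
    exact Submodule.smul_mem _ _ (Submodule.subset_span ⟨i, hi, rfl⟩)

theorem IsStrictUpperTriangular.unitsSMul [Preorder ι]
    {b : Basis ι R M} {f : Module.End R M} (hb : b.IsStrictUpperTriangular f) (w : ι → Rˣ) :
    (b.unitsSMul w).IsStrictUpperTriangular f := by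
  intro j
  rw [span_image_unitsSMul, unitsSMul_apply, Units.smul_def, map_smul]
  exact Submodule.smul_mem _ _ (hb j)

theorem exists_det_unitsSMul_eq_one [Fintype ι] [DecidableEq ι] (e b : Basis ι R M) :
    ∃ w : ι → Rˣ, e.det (b.unitsSMul w) = 1 := by
  rcases isEmpty_or_nonempty ι with hι | ⟨⟨i₀⟩⟩
  · exact ⟨1, by simp⟩
  refine ⟨Pi.mulSingle i₀ (e.isUnit_det b).unit⁻¹, ?_⟩
  rw [← e.det_mul_det b, det_unitsSMul_self, ← Units.coe_prod, Finset.prod_pi_mulSingle',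
    if_pos (Finset.mem_univ _), IsUnit.mul_val_inv]


theorem IsStrictUpperTriangular.sumQuot {κ ι' : Type*} [Preorder κ] [Preorder ι']
    {W : Submodule R M} {f : Module.End R M} (hW : W ≤ W.comap f)
    {bW : Basis κ R W} {bQ : Basis ι' R (M ⧸ W)}
    (hbW : bW.IsStrictUpperTriangular (f.restrict hW))
    (hbQ : bQ.IsStrictUpperTriangular (W.mapQ W f hW)) :
    ((Basis.sumQuot bW bQ).reindex toLex).IsStrictUpperTriangular f := by
  intro j
  obtain ⟨u, rfl⟩ := toLex.surjective j
  set S := Submodule.span R ((Basis.sumQuot bW bQ).reindex toLex '' Set.Iio (toLex u))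
  have hmem : ∀ u', toLex u' < toLex u → Basis.sumQuot bW bQ u' ∈ S := fun u' h =>
    Submodule.subset_span ⟨toLex u', h, by simp⟩
  rw [reindex_apply, Equiv.symm_apply_apply]
  rcases u with i | q
  · have h := Submodule.mem_map_of_mem (f := W.subtype) (hbW i)
    rw [Submodule.map_span, ← Set.image_comp] at h
    rw [sumQuot_inl]
    refine Submodule.span_le.mpr ?_ h
    rintro _ ⟨i', hi', rfl⟩
    simpa using hmem (.inl i') (Sum.Lex.inl_lt_inl_iff.mpr hi')
  · have hWS : W ≤ S := by
      intro x hx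
      have hx' := Submodule.mem_map_of_mem (f := W.subtype)
        (bW.span_eq ▸ Submodule.mem_top : (⟨x, hx⟩ : W) ∈ Submodule.span R (Set.range bW))
      rw [Submodule.map_span, ← Set.range_comp] at hx'
      refine Submodule.span_le.mpr ?_ hx'
      rintro _ ⟨i, rfl⟩
      simpa using hmem (.inl i) (Sum.Lex.inl_lt_inr i q)
    set lift : ι' → M := fun q => Basis.sumQuot bW bQ (.inr q)
    have hlift : W.mkQ ∘ lift = bQ := funext fun q => sumQuot_inr bW bQ q
    have hQ : W.mkQ (f (lift q)) ∈ Submodule.map W.mkQ (Submodule.span R (lift '' Set.Iio q)) := by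
      rw [Submodule.map_span, ← Set.image_comp, hlift]
      have h := hbQ q
      rwa [← congrFun hlift q, Function.comp_apply, Submodule.mkQ_apply, Submodule.mapQ_apply]
        at h
    rw [← Submodule.mem_comap, Submodule.comap_map_mkQ] at hQ
    refine sup_le hWS (Submodule.span_le.mpr ?_) hQ
    rintro _ ⟨q', hq', rfl⟩
    exact hmem (.inr q') (Sum.Lex.inr_lt_inr_iff.mpr hq')

end Module.Basis

theorem LinearMap.isTorsionFree_quotient_ker {R M N : Type*} [CommRing R] [AddCommGroup M]
    [Module R M] [AddCommGroup N] [Module R N] [Module.IsTorsionFree R N] (f : M →ₗ[R] N) :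
    Module.IsTorsionFree R (M ⧸ LinearMap.ker f) :=
  Function.Injective.moduleIsTorsionFree _
    (LinearMap.ker_eq_bot.mp (Submodule.ker_liftQ_eq_bot' _ f rfl)) (map_smul _)

open Module in
theorem Module.End.exists_basis_isStrictUpperTriangular_of_isNilpotent {R M : Type*} [CommRing R]
    [IsDomain R] [IsPrincipalIdealRing R] [AddCommGroup M] [Module R M] [Module.Finite R M]
    [IsTorsionFree R M] {f : Module.End R M} (hf : IsNilpotent f) :
    ∃ (ι : Type) (_ : LinearOrder ι) (_ : Fintype ι) (b : Basis ι R M),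
      b.IsStrictUpperTriangular f := by
  obtain ⟨k, hk⟩ := hf
  induction k generalizing M with
  | zero =>
    have : Subsingleton M := subsingleton_of_forall_eq 0 fun x => by
      simpa using LinearMap.congr_fun hk x
    exact ⟨Empty, inferInstance, inferInstance, Basis.empty M, fun j => j.elim⟩
  | succ k ih =>
    have hK : LinearMap.ker f ≤ (LinearMap.ker f).comap f := f.ker_le_comap
    have := f.isTorsionFree_quotient_ker
    obtain ⟨ι, _, _, bQ, hbQ⟩ := ih (f := (LinearMap.ker f).mapQ _ f hK) (by
      rw [← Submodule.mapQ_pow]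
      ext x
      simp [← Module.End.mul_apply, ← pow_succ', hk])
    let bK := Module.finBasis R (LinearMap.ker f)
    refine ⟨Lex (Fin _ ⊕ ι), inferInstance, inferInstance, _,
      Basis.IsStrictUpperTriangular.sumQuot hK (bW := bK) (fun i => ?_) hbQ⟩
    rw [show f.restrict hK (bK i) = 0 from Subtype.ext (bK i).2]
    exact zero_mem _

theorem Module.Basis.toMatrix_inv_mul_mul_toMatrix {ι R : Type*} [CommRing R] [Fintype ι]
    [DecidableEq ι] (b : Basis ι R (ι → R)) (N : Matrix ι ι R) :
    ((Pi.basisFun R ι).toMatrix b)⁻¹ * N * (Pi.basisFun R ι).toMatrix b =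
      LinearMap.toMatrix b b (Matrix.toLin' N) := by
  rw [Matrix.inv_eq_left_inv (b.toMatrix_mul_toMatrix_flip _),
    ← basis_toMatrix_mul_linearMap_toMatrix_mul_basis_toMatrix b (Pi.basisFun R ι) b
      (Pi.basisFun R ι), LinearMap.toMatrix_eq_toMatrix', LinearMap.toMatrix'_toLin']

theorem Matrix.exists_det_eq_one_conj_strictUpper_of_isNilpotent {R : Type*} [CommRing R]
    [IsDomain R] [IsPrincipalIdealRing R] {n : ℕ} {N : Matrix (Fin n) (Fin n) R}
    (hN : IsNilpotent N) :
    ∃ P : Matrix (Fin n) (Fin n) R, P.det = 1 ∧ ∀ i j, j ≤ i → (P⁻¹ * N * P) i j = 0 := by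
  obtain ⟨ι, _, _, b, hb⟩ :=
    Module.End.exists_basis_isStrictUpperTriangular_of_isNilpotent (hN.map Matrix.toLinAlgEquiv')
  have hcard : Fintype.card ι = n := by simpa using (Module.finrank_eq_card_basis b).symm
  let e := Pi.basisFun R (Fin n)
  let b' := b.reindex (Fintype.orderIsoFinOfCardEq ι hcard).symm.toEquiv
  obtain ⟨w, hw⟩ := e.exists_det_unitsSMul_eq_one b'
  refine ⟨e.toMatrix (b'.unitsSMul w), by rwa [← Module.Basis.det_apply], fun i j hij => ?_⟩
  rw [Module.Basis.toMatrix_inv_mul_mul_toMatrix]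
  exact ((hb.reindex _).unitsSMul w).toMatrix_eq_zero hij

theorem Matrix.exists_det_eq_one_conj_unitriangular {R : Type*} [CommRing R] [IsDomain R]
    [IsPrincipalIdealRing R] {n : ℕ} {A : Matrix (Fin n) (Fin n) R} (hA : IsNilpotent (A - 1)) :
    ∃ P : Matrix (Fin n) (Fin n) R, P.det = 1 ∧ (∀ i j, j < i → (P⁻¹ * A * P) i j = 0) ∧
      ∀ i, (P⁻¹ * A * P) i i = 1 := by
  obtain ⟨P, hP, hstrict⟩ := exists_det_eq_one_conj_strictUpper_of_isNilpotent hA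
  have hconj : P⁻¹ * A * P = P⁻¹ * (A - 1) * P + 1 := by
    rw [mul_sub, sub_mul, mul_one, nonsing_inv_mul P (by simp [hP]), sub_add_cancel]
  refine ⟨P, hP, fun i j hij => ?_, fun i => ?_⟩
  · rw [hconj, add_apply, hstrict i j hij.le, one_apply_ne hij.ne', add_zero]
  · rw [hconj, add_apply, hstrict i i le_rfl, one_apply_eq, zero_add]

section Torus

variable {d : ℕ}

theorem torusLin_mul (M M' : Matrix (Fin d) (Fin d) ℤ) (x : Torus d) :
    torusLin (M * M') x = torusLin M (torusLin M' x) := by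
  funext i
  simp only [torusLin, Matrix.mul_apply, Finset.smul_sum, Finset.sum_smul, mul_smul]
  rw [Finset.sum_comm]

theorem torusLin_one (x : Torus d) : torusLin 1 x = x := by
  funext i
  simp [torusLin, Matrix.one_apply, ite_smul]

theorem torusLin_add (M : Matrix (Fin d) (Fin d) ℤ) (x y : Torus d) :
    torusLin M (x + y) = torusLin M x + torusLin M y := by
  funext i
  simp [torusLin, smul_add, Finset.sum_add_distrib]

theorem continuous_torusLin (M : Matrix (Fin d) (Fin d) ℤ) : Continuous (torusLin M) :=
  continuous_pi fun i => continuous_finsetSum _ fun j _ =>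
    (continuous_zsmul (M i j)).comp (continuous_apply j)

def torusLinHomeomorph (P : Matrix (Fin d) (Fin d) ℤ) (hP : IsUnit P.det) :
    Torus d ≃ₜ Torus d where
  toFun := torusLin P
  invFun := torusLin P⁻¹
  left_inv x := by rw [← torusLin_mul, Matrix.nonsing_inv_mul P hP, torusLin_one]
  right_inv x := by rw [← torusLin_mul, Matrix.mul_nonsing_inv P hP, torusLin_one]
  continuous_toFun := continuous_torusLin P
  continuous_invFun := continuous_torusLin P⁻¹

theorem torusAffine_comp_torusLin {A B P P' : Matrix (Fin d) (Fin d) ℤ} (hAP : A * P = P * B)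
    (hPP' : P * P' = 1) (a : Torus d) :
    torusAffine A a ∘ torusLin P = torusLin P ∘ torusAffine B (torusLin P' a) := by
  funext x
  change torusLin A (torusLin P x) + a = torusLin P (torusLin B x + torusLin P' a)
  rw [torusLin_add, ← torusLin_mul, ← torusLin_mul, ← torusLin_mul, hAP, hPP', torusLin_one]

end Torus

theorem affineDistal_torus_triangularizable_general
    (d : ℕ)
    (A : Matrix (Fin d) (Fin d) ℤ)
    (hchar : A.charpoly = (X - 1) ^ d) :
    ∃ P : Matrix (Fin d) (Fin d) ℤ, P.det = 1 ∧
      (∀ i j : Fin d, j < i → (P⁻¹ * A * P) i j = 0) ∧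
      (∀ i : Fin d, (P⁻¹ * A * P) i i = 1) ∧
      ∃ h : Torus d ≃ₜ Torus d, (∀ x, h x = torusLin P x) ∧
        ∀ a : Torus d, a ≠ 0 →
          (torusAffine A a) ∘ h = h ∘ (torusAffine (P⁻¹ * A * P) (torusLin P⁻¹ a)) := by
  have hnil : IsNilpotent (A - 1) := ⟨d, by simpa [hchar] using A.aeval_self_charpoly⟩
  obtain ⟨P, hP, hlower, hdiag⟩ := Matrix.exists_det_eq_one_conj_unitriangular hnil
  have hPu : IsUnit P.det := hP ▸ isUnit_one
  refine ⟨P, hP, hlower, hdiag, torusLinHomeomorph P hPu, fun _ => rfl, fun a _ =>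
    torusAffine_comp_torusLin ?_ (Matrix.mul_nonsing_inv P hPu) a⟩
  rw [← Matrix.mul_assoc, ← Matrix.mul_assoc, Matrix.mul_nonsing_inv P hPu, Matrix.one_mul]

/-- Every matrix `A ∈ GL(d,ℤ)` (`d ≥ 2`) all of whose complex eigenvalues equal 1
(charpoly `(X-1)^d`) is conjugate, by some `P ∈ GL(d,ℤ)` with `det P = 1`, to an upper
unitriangular integer matrix `B = P⁻¹ A P`. Consequently every affine distal flow
`T x = A x + a` on the `d`-torus is topologically conjugate, via the homeomorphism
`h x = P x`, to the flow `T' x = B x + P⁻¹ a`, i.e. `T ∘ h = h ∘ T'`. -/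
theorem affineDistal_torus_triangularizable
    (d : ℕ) (hd : 2 ≤ d)
    (A : Matrix (Fin d) (Fin d) ℤ) (hA : IsUnit A.det)
    (hchar : A.charpoly = (X - 1) ^ d) :
    ∃ P : Matrix (Fin d) (Fin d) ℤ, P.det = 1 ∧
      (∀ i j : Fin d, j < i → (P⁻¹ * A * P) i j = 0) ∧
      (∀ i : Fin d, (P⁻¹ * A * P) i i = 1) ∧
      ∃ h : Torus d ≃ₜ Torus d, (∀ x, h x = torusLin P x) ∧
        ∀ a : Torus d, a ≠ 0 →
          (torusAffine A a) ∘ h = h ∘ (torusAffine (P⁻¹ * A * P) (torusLin P⁻¹ a)) :=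
  affineDistal_torus_triangularizable_general d A hchar
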